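/- arXiv:2505.09321 — 3 statements merged into one kernel-verified Lean document; each statement's English description precedes it below -/
import Mathlib

section
/- Let S be a finite multiset of positive reals with sum at most 1. Define the weight w(x) = 1/k if x ∈ (1/(k+1), 1/k] for k ∈ {1,2,3}, and w(x) = 0 if x ∈ (0, 1/4]. Then the total weight of S is at most 3/2. -/
noncomputable def harmonicWeight (x : ℝ) : ℝ :=
  if 1/2 < x then 1
  else if 1/3 < x then 1/2
  else if 1/4 < x then 1/3
  else 0

lemma hw_zero {x : ℝ} (h : x ≤ 1/4) : harmonicWeight x = 0 := by
  unfold harmonicWeight; split_ifs <;> linarith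

lemma hw_le_half {x : ℝ} (h : x ≤ 1/2) : harmonicWeight x ≤ 1/2 := by
  unfold harmonicWeight; split_ifs <;> norm_num <;> linarith

lemma hw_one {x : ℝ} (h : 1/2 < x) : harmonicWeight x = 1 := by
  unfold harmonicWeight; split_ifs <;> norm_num

lemma hw_le {x : ℝ} (h0 : 0 < x) (h : x ≤ 1/2) : harmonicWeight x ≤ 3/2 * x := by
  unfold harmonicWeight; split_ifs <;> linarith

lemma sum_mul (T : Multiset ℝ) : (T.map (fun x => 3/2 * x)).sum = 3/2 * T.sum := by
  induction T using Multiset.induction_on with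
  | empty => simp
  | cons x T ih => simp [ih]; ring

lemma sum_zero (T : Multiset ℝ) (h : ∀ x ∈ T, x ≤ 1/4) :
    (T.map harmonicWeight).sum = 0 := by
  apply Multiset.sum_eq_zero
  intro y hy
  obtain ⟨x, hx, rfl⟩ := Multiset.mem_map.mp hy
  exact hw_zero (h x hx)

lemma sum_half (T : Multiset ℝ) (hpos : ∀ x ∈ T, 0 < x) (h : T.sum ≤ 1/2) :
    (T.map harmonicWeight).sum ≤ 1/2 := by
  induction T using Multiset.induction_on with
  | empty => simp
  | cons x T ih =>
    simp only [Multiset.map_cons, Multiset.sum_cons] at *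
    have hxpos : 0 < x := hpos x (by simp)
    have hTpos : ∀ y ∈ T, 0 < y := fun y hy => hpos y (by simp [hy])
    have hTnn : ∀ y ∈ T, 0 ≤ y := fun y hy => le_of_lt (hTpos y hy)
    have hTsum : 0 ≤ T.sum := Multiset.sum_nonneg hTnn
    by_cases hx : x ≤ 1/4
    · rw [hw_zero hx, zero_add]
      exact ih hTpos (by linarith)
    · push_neg at hx
      have hT0 : (T.map harmonicWeight).sum = 0 := by
        apply sum_zero
        intro y hy
        have := Multiset.single_le_sum hTnn y hy
        linarith
      rw [hT0, add_zero]
      exact hw_le_half (by linarith)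

theorem stmt_2 (S : Multiset ℝ) (hpos : ∀ x ∈ S, 0 < x) (hsum : S.sum ≤ 1) :
    (S.map harmonicWeight).sum ≤ 3/2 := by
  by_cases hbig : ∃ a ∈ S, 1/2 < a
  · obtain ⟨a, haS, ha⟩ := hbig
    obtain ⟨T, rfl⟩ := Multiset.exists_cons_of_mem haS
    simp only [Multiset.map_cons, Multiset.sum_cons] at *
    have hTpos : ∀ y ∈ T, 0 < y := fun y hy => hpos y (Multiset.mem_cons_of_mem hy)
    have := sum_half T hTpos (by linarith)
    rw [hw_one ha]
    linarith
  · push_neg at hbig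
    have h1 : (S.map harmonicWeight).sum ≤ (S.map (fun x => 3/2 * x)).sum := by
      apply Multiset.sum_map_le_sum_map
      intro x hx
      exact hw_le (hpos x hx) (hbig x hx)
    rw [sum_mul] at h1
    linarith
end

section
/- Let S be a finite multiset of positive reals with sum at most 1 that contains an element strictly greater than 1/2. Define w(x) = 1/k if x ∈ (1/(k+1), 1/k] for k ∈ {1,2,3} and w(x) = 0 if x ≤ 1/4. Then at most one element of S besides the large element has nonzero weight, and the total weight of S is at most 1 + 1/2 = 3/2. -/
lemma hw_ne_zero {x : ℝ} (h : harmonicWeight x ≠ 0) : 1/4 < x := by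
  unfold harmonicWeight at h
  split_ifs at h with h1 h2 h3
  · linarith
  · linarith
  · linarith
  · exact absurd rfl h

lemma hw_nonneg (x : ℝ) : 0 ≤ harmonicWeight x := by
  unfold harmonicWeight; split_ifs <;> norm_num

lemma sum_nonneg_of_mem {M : Multiset ℝ} (h : ∀ x ∈ M, 0 ≤ x) : 0 ≤ M.sum := by
  induction M using Multiset.induction with
  | empty => simp
  | cons a s ih =>
    simp only [Multiset.sum_cons]
    have := h a (Multiset.mem_cons_self a s)
    have := ih (fun x hx => h x (Multiset.mem_cons_of_mem hx))
    linarith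

lemma mem_le_sum {M : Multiset ℝ} (h : ∀ x ∈ M, 0 ≤ x) {x : ℝ} (hx : x ∈ M) :
    x ≤ M.sum := by
  have := Multiset.cons_erase hx
  have hrest : 0 ≤ (M.erase x).sum := sum_nonneg_of_mem (fun y hy => h y (Multiset.mem_of_mem_erase hy))
  calc x ≤ x + (M.erase x).sum := by linarith
    _ = M.sum := by rw [← Multiset.sum_cons, this]

lemma sum_le_of_le {M N : Multiset ℝ} (h : M ≤ N) (hn : ∀ x ∈ N, 0 ≤ x) :
    M.sum ≤ N.sum := by
  obtain ⟨K, rfl⟩ := Multiset.le_iff_exists_add.mp h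
  have : 0 ≤ K.sum := sum_nonneg_of_mem (fun x hx => hn x (by simp [hx]))
  simp only [Multiset.sum_add]; linarith

open Classical in
theorem stmt_3 (S : Multiset ℝ) (hpos : ∀ x ∈ S, 0 < x) (hsum : S.sum ≤ 1)
    (a : ℝ) (ha : a ∈ S) (halarge : 1/2 < a) :
    Multiset.card ((S.erase a).filter (fun x => harmonicWeight x ≠ 0)) ≤ 1 ∧
    (S.map harmonicWeight).sum ≤ 3/2 := by
  set T := S.erase a with hT
  have hST : a ::ₘ T = S := Multiset.cons_erase ha
  have hTpos : ∀ x ∈ T, 0 < x := fun x hx => hpos x (Multiset.mem_of_mem_erase hx)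
  have hTnn : ∀ x ∈ T, 0 ≤ x := fun x hx => le_of_lt (hTpos x hx)
  have hTsum : T.sum < 1/2 := by
    have : a + T.sum = S.sum := by rw [← Multiset.sum_cons, hST]
    linarith
  set F := T.filter (fun x => harmonicWeight x ≠ 0) with hF
  have hFT : F ≤ T := Multiset.filter_le _ _
  have hcard : Multiset.card F ≤ 1 := by
    by_contra hc
    push_neg at hc
    have h2 : 2 ≤ Multiset.card F := hc
    have hFne : F ≠ 0 := by
      intro h0; rw [h0] at h2; simp at h2
    obtain ⟨x, hx⟩ := Multiset.exists_mem_of_ne_zero hFne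
    have hcard' : 1 ≤ Multiset.card (F.erase x) := by
      have h3 := Multiset.card_erase_of_mem hx
      rw [Nat.pred_eq_sub_one] at h3
      omega
    have hFne' : F.erase x ≠ 0 := by
      intro h0; rw [h0] at hcard'; simp at hcard'
    obtain ⟨y, hy⟩ := Multiset.exists_mem_of_ne_zero hFne'
    have hxq : 1/4 < x := hw_ne_zero (Multiset.mem_filter.mp hx).2
    have hyq : 1/4 < y := hw_ne_zero (Multiset.mem_filter.mp (Multiset.mem_of_mem_erase hy)).2
    have hle : (x ::ₘ y ::ₘ 0 : Multiset ℝ) ≤ F := by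
      rw [← Multiset.cons_erase hx]
      apply Multiset.cons_le_cons
      rw [← Multiset.cons_erase hy]
      apply Multiset.cons_le_cons
      exact Multiset.zero_le _
    have hFnn : ∀ z ∈ F, 0 ≤ z := fun z hz => hTnn z (Multiset.mem_of_le hFT hz)
    have h1 : (x ::ₘ y ::ₘ 0 : Multiset ℝ).sum ≤ F.sum := sum_le_of_le hle hFnn
    have h2' : F.sum ≤ T.sum := sum_le_of_le hFT hTnn
    simp only [Multiset.sum_cons, Multiset.sum_zero] at h1
    linarith
  refine ⟨hcard, ?_⟩
  have hmap : (S.map harmonicWeight).sum = 1 + (T.map harmonicWeight).sum := by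
    rw [← hST, Multiset.map_cons, Multiset.sum_cons]
    congr 1
    unfold harmonicWeight
    rw [if_pos halarge]
  have hTw : (T.map harmonicWeight).sum ≤ 1/2 := by
    have hsplit : T = F + T.filter (fun x => ¬ harmonicWeight x ≠ 0) :=
      (Multiset.filter_add_not _ _).symm
    have hzero : ((T.filter (fun x => ¬ harmonicWeight x ≠ 0)).map harmonicWeight).sum = 0 := by
      apply Multiset.sum_eq_zero
      intro z hz
      obtain ⟨w, hw, rfl⟩ := Multiset.mem_map.mp hz
      have := Multiset.of_mem_filter hw
      simpa using this
    have : (T.map harmonicWeight).sum = (F.map harmonicWeight).sum := by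
      conv_lhs => rw [hsplit]
      rw [Multiset.map_add, Multiset.sum_add, hzero, add_zero]
    rw [this]
    interval_cases h : Multiset.card F
    · rw [Multiset.card_eq_zero.mp h]; norm_num
    · obtain ⟨x, hxx⟩ := Multiset.card_eq_one.mp h
      rw [hxx]
      simp only [Multiset.map_singleton, Multiset.sum_singleton]
      have hxT : x ∈ T := Multiset.mem_of_le hFT (hxx ▸ Multiset.mem_singleton_self x)
      have : x ≤ T.sum := mem_le_sum hTnn hxT
      exact hw_le_half (by linarith)
  linarith
end

section
/- Fix a capacity-1 bin packing instance where every bin of any packing holds at most two items. If an algorithm's packing has n₁ bins containing a large item and y' additional nonempty bins, and in the optimal packing at most x_s of the y' items in those additional bins can be paired with large items, then OPT ≥ n₁ + (y' - x_s)/2 whenever y' ≥ x_s. -/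
theorem stmt_9 {ι : Type*} [Fintype ι] [DecidableEq ι]
    (Large Small : Finset ι) (hdisj : Disjoint Large Small)
    (hcover : ∀ i : ι, i ∈ Large ∪ Small)
    (P : ι → ℕ)
    (hcap : ∀ b : ℕ, (Finset.univ.filter (fun i => P i = b)).card ≤ 2)
    (hlarge : ∀ i ∈ Large, ∀ j ∈ Large, P i = P j → i = j)
    (xs : ℕ)
    (hxs : (Small.filter (fun s => ∃ i ∈ Large, P i = P s)).card ≤ xs)
    (hge : xs ≤ Small.card) :
    (Large.card : ℝ) + ((Small.card : ℝ) - xs) / 2 ≤ ((Finset.univ.image P).card : ℝ) := by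
  classical
  set S' := Small.filter (fun s => ¬ ∃ i ∈ Large, P i = P s) with hS'
  set BL := Large.image P with hBL
  set BS := S'.image P with hBSdef
  have hBLcard : BL.card = Large.card := by
    apply Finset.card_image_of_injOn
    intro i hi j hj hij
    exact hlarge i hi j hj hij
  have hdisjB : Disjoint BL BS := by
    rw [Finset.disjoint_left]
    rintro b hbL hbS
    obtain ⟨i, hi, hPi⟩ := Finset.mem_image.mp hbL
    obtain ⟨s, hs, hPs⟩ := Finset.mem_image.mp hbS
    rw [Finset.mem_filter] at hs
    exact hs.2 ⟨i, hi, hPi.trans hPs.symm⟩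
  have hS'card : Small.card - xs ≤ S'.card := by
    have := Finset.card_filter_add_card_filter_not
      (s := Small) (p := fun s => ∃ i ∈ Large, P i = P s)
    have heq : (Small.filter (fun a => ¬ ∃ i ∈ Large, P i = P a)).card = S'.card := rfl
    omega
  have hfiber : S'.card ≤ 2 * BS.card := by
    apply Finset.card_le_mul_card_image
    intro a _
    calc (S'.filter (fun x => P x = a)).card
        ≤ (Finset.univ.filter (fun i => P i = a)).card := by
          apply Finset.card_le_card
          intro x hx
          simp only [Finset.mem_filter] at hx ⊢
          exact ⟨Finset.mem_univ x, hx.2⟩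
      _ ≤ 2 := hcap a
  have hsub : BL ∪ BS ⊆ Finset.univ.image P := by
    intro b hb
    rcases Finset.mem_union.mp hb with h | h
    · obtain ⟨i, _, hi⟩ := Finset.mem_image.mp h
      exact Finset.mem_image.mpr ⟨i, Finset.mem_univ i, hi⟩
    · obtain ⟨i, _, hi⟩ := Finset.mem_image.mp h
      exact Finset.mem_image.mpr ⟨i, Finset.mem_univ i, hi⟩
  have hcards : Large.card + BS.card ≤ (Finset.univ.image P).card := by
    calc Large.card + BS.card = BL.card + BS.card := by rw [hBLcard]
      _ = (BL ∪ BS).card := (Finset.card_union_of_disjoint hdisjB).symm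
      _ ≤ _ := Finset.card_le_card hsub
  -- now pass to reals
  have h1 : (Small.card : ℝ) - xs ≤ 2 * BS.card := by
    have : (Small.card - xs : ℕ) ≤ 2 * BS.card := le_trans hS'card hfiber
    calc (Small.card : ℝ) - xs ≤ ((Small.card - xs : ℕ) : ℝ) := by
          rw [Nat.cast_sub hge]
      _ ≤ ((2 * BS.card : ℕ) : ℝ) := by exact_mod_cast this
      _ = 2 * BS.card := by push_cast; ring
  have h2 : (Large.card : ℝ) + BS.card ≤ ((Finset.univ.image P).card : ℝ) := by
    exact_mod_cast hcards
  linarith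
end
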